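/- arXiv:2108.04969 — 3 statements merged into one kernel-verified Lean document; each statement's English description precedes it below -/
import Mathlib

section
/- Let a : ℕ → ℕ be any function and n ≥ 1. In the ring of formal power series ℤ⟦X⟧, the coefficient of X^n in the finite product ∏_{i=1}^{n} (1 − a(i)·X^i)⁻¹ equals the sum, over all partitions p of n, of the product ∏_{i ∈ p} a(i). -/
open PowerSeries

/-!
The factor `(1 - a i • X ^ i)⁻¹` is the geometric series `1 / (1 - X)`, rescaled by `a i` and
expanded by `X ↦ X ^ i`, so its coefficient of `X ^ d` is `a i ^ (d / i)` when `i ∣ d` and `0`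
otherwise. Expanding the product, a nonzero contribution to `X ^ n` chooses degrees `k i * i`
with `∑ k i * i = n`, that is a partition of `n` with `k i` parts equal to `i`, and contributes
`∏ a i ^ k i`.
-/

namespace Nat.Partition

theorem exists_toFinsuppAntidiag_eq {n : ℕ} {l : ℕ →₀ ℕ}
    (hl : l ∈ (Finset.Icc 1 n).finsuppAntidiag n) (hdvd : ∀ i ∈ Finset.Icc 1 n, i ∣ l i) :
    ∃ p : n.Partition, p.toFinsuppAntidiag = l := by
  classical
  rw [Finset.mem_finsuppAntidiag] at hl
  obtain ⟨hsum, hsupp⟩ := hl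
  have hzero : ∀ i ∉ Finset.Icc 1 n, l i = 0 := fun i hi =>
    Finsupp.notMem_support_iff.mp fun h => hi (hsupp h)
  let parts : Multiset ℕ := ∑ i ∈ Finset.Icc 1 n, Multiset.replicate (l i / i) i
  have hcount : ∀ j, parts.count j * j = l j := by
    intro j
    simp only [parts, Multiset.count_sum', Multiset.count_replicate, Finset.sum_ite_eq']
    split_ifs with hj
    · exact Nat.div_mul_cancel (hdvd j hj)
    · rw [hzero j hj, zero_mul]
  refine ⟨⟨parts, fun {j} hj => ?_, ?_⟩, ?_⟩
  · obtain ⟨i, hi, hji⟩ := Multiset.mem_sum.mp hj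
    rw [Multiset.eq_of_mem_replicate hji]
    exact (Finset.mem_Icc.mp hi).1
  · simp only [parts, Multiset.sum_sum, Multiset.sum_replicate, smul_eq_mul]
    exact (Finset.sum_congr rfl fun i hi => Nat.div_mul_cancel (hdvd i hi)).trans hsum
  · ext j
    exact hcount j

theorem prod_map_parts_eq_prod_Icc_pow_count {M : Type*} [CommMonoid M] {n : ℕ}
    (p : n.Partition) (a : ℕ → M) :
    (p.parts.map a).prod = ∏ i ∈ Finset.Icc 1 n, a i ^ p.parts.count i := by
  classical
  rw [Finset.prod_multiset_map_count]
  refine Finset.prod_subset (fun i hi => ?_) fun i _ hi => ?_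
  · rw [Multiset.mem_toFinset] at hi
    exact Finset.mem_Icc.mpr ⟨p.parts_pos hi, p.le_of_mem_parts hi⟩
  · rw [Multiset.count_eq_zero_of_notMem (by simpa using hi), pow_zero]

end Nat.Partition

namespace PowerSeries

theorem inverse_one_sub_C_mul_X_pow {R : Type*} [CommRing R] (a : R) {i : ℕ} (hi : i ≠ 0) :
    Ring.inverse (1 - C a * X ^ i) = expand i hi (rescale a (mk 1)) := by
  have h : expand i hi (rescale a (mk 1)) * (1 - C a * X ^ i) = 1 := by
    simpa [rescale_X, expand_C] using
      congrArg (expand i hi ∘ rescale a) (mk_one_mul_one_sub_eq_one R)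
  have hu : IsUnit (1 - C a * X ^ i) := IsUnit.of_mul_eq_one_right _ h
  simpa using (Ring.inverse_mul_eq_iff_eq_mul _ 1 _ hu).2 (by rw [mul_comm, h])

theorem coeff_inverse_one_sub_C_mul_X_pow {R : Type*} [CommRing R] (a : R) {i : ℕ} (hi : i ≠ 0)
    (d : ℕ) : coeff d (Ring.inverse (1 - C a * X ^ i)) = if i ∣ d then a ^ (d / i) else 0 := by
  simp [inverse_one_sub_C_mul_X_pow a hi, coeff_expand]

theorem coeff_prod_Icc_eq_sum_partition {R : Type*} [CommSemiring R] (f : ℕ → R⟦X⟧)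
    (c : ℕ → ℕ → R) {n : ℕ}
    (hf : ∀ i ∈ Finset.Icc 1 n, ∀ d, coeff d (f i) = if i ∣ d then c i (d / i) else 0) :
    coeff n (∏ i ∈ Finset.Icc 1 n, f i) =
      ∑ p : n.Partition, ∏ i ∈ Finset.Icc 1 n, c i (p.parts.count i) := by
  classical
  rw [coeff_prod]
  refine (Finset.sum_of_injOn Nat.Partition.toFinsuppAntidiag
    (Nat.Partition.toFinsuppAntidiag_injective n).injOn
    (fun p _ => p.toFinsuppAntidiag_mem_finsuppAntidiag) (fun l hl hl' => ?_) fun p _ => ?_).symm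
  · obtain ⟨i, hi, hndvd⟩ : ∃ i ∈ Finset.Icc 1 n, ¬ i ∣ l i := by
      by_contra! hdvd
      obtain ⟨p, rfl⟩ := Nat.Partition.exists_toFinsuppAntidiag_eq hl hdvd
      exact hl' ⟨p, Finset.mem_coe.mpr (Finset.mem_univ p), rfl⟩
    exact Finset.prod_eq_zero hi (by rw [hf i hi, if_neg hndvd])
  · refine Finset.prod_congr rfl fun i hi => ?_
    rw [hf i hi, Nat.Partition.toFinsuppAntidiag, Finsupp.coe_mk, if_pos (dvd_mul_left _ _),
      Nat.mul_div_cancel _ (Finset.mem_Icc.mp hi).1]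

end PowerSeries

theorem stmt_2_general (a : ℕ → ℕ) (n : ℕ) :
    PowerSeries.coeff (R := ℤ) n
        (∏ i ∈ Finset.Icc 1 n,
          Ring.inverse (1 - PowerSeries.C (R := ℤ) (a i : ℤ) * (PowerSeries.X : ℤ⟦X⟧) ^ i))
      = ∑ p : Nat.Partition n, ((p.parts.map a).prod : ℤ) := by
  rw [coeff_prod_Icc_eq_sum_partition _ (fun i k => (a i : ℤ) ^ k)
    fun i hi => coeff_inverse_one_sub_C_mul_X_pow _
      (Nat.one_le_iff_ne_zero.mp (Finset.mem_Icc.mp hi).1)]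
  refine Finset.sum_congr rfl fun p _ => ?_
  rw [Nat.cast_multiset_prod, Multiset.map_map, p.prod_map_parts_eq_prod_Icc_pow_count]
  rfl

/-- For any `a : ℕ → ℕ` and `n ≥ 1`, the coefficient of `X^n` in
`∏_{i=1}^{n} (1 - a i * X^i)⁻¹` (inverses taken via `Ring.inverse` in `ℤ⟦X⟧`)
equals the sum over partitions `p` of `n` of `∏_{i ∈ p} a i`. -/
theorem stmt_2 (a : ℕ → ℕ) (n : ℕ) (hn : 1 ≤ n) :
    PowerSeries.coeff (R := ℤ) n
        (∏ i ∈ Finset.Icc 1 n,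
          Ring.inverse (1 - PowerSeries.C (R := ℤ) (a i : ℤ) * (PowerSeries.X : ℤ⟦X⟧) ^ i))
      = ∑ p : Nat.Partition n, ((p.parts.map a).prod : ℤ) :=
  stmt_2_general a n
end

section
/- Let a : ℕ → ℕ satisfy a(1) = 1 and a(2) = 1. Then the following are equivalent: (i) for every n ≥ 1, a(n+2) equals the sum over all partitions p of n of the product ∏_{i ∈ p} a(i); (ii) for every n ≥ 1, a(n) equals the coefficient of X^n in the formal power series X + X²·∏_{i=1}^{n} (1 − a(i)·X^i)⁻¹ in ℤ⟦X⟧. -/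
/-!
Expanding each factor as a geometric series, `(1 - a i • X ^ i)⁻¹ = ∑ₖ a i ^ k • X ^ (i * k)`,
the coefficient of `X ^ n` in `∏_{i ≤ m} (1 - a i • X ^ i)⁻¹` for `m ≥ n` is
`∑_{p ⊢ n} ∏_{i ∈ p} a i`: picking the term `X ^ (i * k)` from the `i`-th factor means giving the
part `i` multiplicity `k`. So condition (ii) at `n + 2` is condition (i) at `n`, while (ii) at
`n = 1` and `n = 2` (where the empty partition of `0` contributes `1`) is `a 1 = 1` and `a 2 = 1`.
-/

open PowerSeries Finset

theorem PowerSeries.mk_pow_mul_one_sub_C_mul_X {R : Type*} [CommRing R] (c : R) :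
    (mk fun k => c ^ k) * (1 - C c * X) = 1 := by
  simpa [rescale_mk, rescale_X] using congrArg (rescale c) (mk_one_mul_one_sub_eq_one (S := R))

theorem PowerSeries.inverse_one_sub_C_mul_X_pow_s4 {R : Type*} [CommRing R] (c : R) {i : ℕ}
    (hi : i ≠ 0) :
    Ring.inverse (1 - C c * X ^ i) = mk fun k => if i ∣ k then c ^ (k / i) else 0 := by
  have hexp : expand i hi (mk fun k => c ^ k) = mk fun k => if i ∣ k then c ^ (k / i) else 0 := by
    ext k
    rw [coeff_expand, coeff_mk, coeff_mk]
  have hmul : (1 - C c * X ^ i) * (mk fun k => if i ∣ k then c ^ (k / i) else 0) = 1 := by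
    simpa [← hexp, expand_X, expand_C, mul_comm] using
      congrArg (expand i hi) (mk_pow_mul_one_sub_C_mul_X c)
  let := invertibleOfRightInverse _ _ hmul
  exact Ring.inverse_invertible _

theorem Nat.Partition.exists_toFinsuppAntidiag_eq_s4 {n : ℕ} {s : Finset ℕ} (hs0 : 0 ∉ s)
    {g : ℕ →₀ ℕ} (hg : g ∈ s.finsuppAntidiag n) (hdvd : ∀ i ∈ s, i ∣ g i) :
    ∃ p : n.Partition, p.toFinsuppAntidiag = g := by
  rw [mem_finsuppAntidiag] at hg
  refine ⟨⟨∑ i ∈ s, Multiset.replicate (g i / i) i, fun {i} hi => ?_, ?_⟩, ?_⟩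
  · obtain ⟨j, hj, hij⟩ := Multiset.mem_sum.mp hi
    rw [Multiset.eq_of_mem_replicate hij]
    exact Nat.pos_of_ne_zero (by rintro rfl; exact hs0 hj)
  · simp only [Multiset.sum_sum, Multiset.sum_replicate, smul_eq_mul]
    rw [← hg.1]
    exact sum_congr rfl fun i hi => Nat.div_mul_cancel (hdvd i hi)
  · ext j
    simp only [toFinsuppAntidiag, Finsupp.coe_mk, Multiset.count_sum', Multiset.count_replicate,
      sum_ite_eq']
    split_ifs with hj
    · exact Nat.div_mul_cancel (hdvd j hj)
    · rw [zero_mul, eq_comm, ← Finsupp.notMem_support_iff]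
      exact fun h => hj (hg.2 h)

theorem Nat.Partition.sum_prod_map_eq_coeff_prod {R : Type*} [CommSemiring R] (w : ℕ → R)
    {n : ℕ} {s : Finset ℕ} (hs : Icc 1 n ⊆ s) (hs0 : 0 ∉ s) :
    ∑ p : n.Partition, (p.parts.map w).prod =
      coeff n (∏ i ∈ s, PowerSeries.mk fun k => if i ∣ k then w i ^ (k / i) else 0) := by
  rw [coeff_prod]
  refine sum_of_injOn toFinsuppAntidiag (toFinsuppAntidiag_injective n).injOn
    (fun p _ => finsuppAntidiag_mono hs n p.toFinsuppAntidiag_mem_finsuppAntidiag) ?_ ?_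
  · intro g hg hg_range
    obtain ⟨i, hi, hndvd⟩ : ∃ i ∈ s, ¬ i ∣ g i := by
      by_contra! hdvd
      obtain ⟨p, rfl⟩ := exists_toFinsuppAntidiag_eq_s4 hs0 hg hdvd
      exact hg_range ⟨p, mem_univ p, rfl⟩
    exact prod_eq_zero hi (by rw [coeff_mk, if_neg hndvd])
  · intro p _
    have hparts : p.parts.toFinset ⊆ s := fun i hi => by
      rw [Multiset.mem_toFinset] at hi
      exact hs (mem_Icc.mpr ⟨p.parts_pos hi, p.le_of_mem_parts hi⟩)
    rw [prod_multiset_map_count, prod_subset hparts fun i _ hi => by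
      rw [Multiset.count_eq_zero_of_notMem (mt Multiset.mem_toFinset.mpr hi), pow_zero]]
    refine prod_congr rfl fun i hi => ?_
    have hi0 : 0 < i := Nat.pos_of_ne_zero (by rintro rfl; exact hs0 hi)
    simp [toFinsuppAntidiag, coeff_mk, Nat.mul_div_cancel _ hi0]

theorem PowerSeries.coeff_prod_inverse_one_sub_C_mul_X_pow {R : Type*} [CommRing R] (w : ℕ → R)
    {n m : ℕ} (hnm : n ≤ m) :
    coeff n (∏ i ∈ Icc 1 m, Ring.inverse (1 - C (w i) * X ^ i)) =
      ∑ p : n.Partition, (p.parts.map w).prod := by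
  rw [Nat.Partition.sum_prod_map_eq_coeff_prod w (Icc_subset_Icc_right hnm) (by simp)]
  exact congrArg _ (prod_congr rfl fun i hi =>
    inverse_one_sub_C_mul_X_pow_s4 _ (by rw [mem_Icc] at hi; omega))

/-- For `a : ℕ → ℕ` with `a 1 = 1` and `a 2 = 1`, the partition recurrence
`a (n+2) = ∑_{p ⊢ n} ∏_{i ∈ p} a i` (for all `n ≥ 1`) is equivalent to the
coefficientwise generating function identity
`a n = [X^n] (X + X² ∏_{i=1}^{n} (1 - a i · X^i)⁻¹)` (for all `n ≥ 1`) in `ℤ⟦X⟧`. -/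
theorem stmt_4 (a : ℕ → ℕ) (ha1 : a 1 = 1) (ha2 : a 2 = 1) :
    (∀ n : ℕ, 1 ≤ n →
        (a (n + 2) : ℤ) = ∑ p : Nat.Partition n, ((p.parts.map a).prod : ℤ))
      ↔ (∀ n : ℕ, 1 ≤ n →
        (a n : ℤ) = PowerSeries.coeff (R := ℤ) n
          ((PowerSeries.X : ℤ⟦X⟧) + (PowerSeries.X : ℤ⟦X⟧) ^ 2 *
            ∏ i ∈ Finset.Icc 1 n,
              Ring.inverse (1 - PowerSeries.C (R := ℤ) (a i : ℤ) * (PowerSeries.X : ℤ⟦X⟧) ^ i))) := by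
  set S : ℕ → ℤ := fun n => ∑ p : n.Partition, ((p.parts.map a).prod : ℤ)
  have hcoeff_add_two : ∀ n, coeff (n + 2) ((X : ℤ⟦X⟧) + X ^ 2 * ∏ i ∈ Icc 1 (n + 2),
      Ring.inverse (1 - C (a i : ℤ) * (X : ℤ⟦X⟧) ^ i)) = S n := fun n => by
    rw [map_add, coeff_X, coeff_X_pow_mul', if_neg (by omega), if_pos (by omega),
      Nat.add_sub_cancel, zero_add, coeff_prod_inverse_one_sub_C_mul_X_pow _ (by omega)]
    simp [S, Multiset.map_map]
  have hS_zero : S 0 = 1 := by simp [S]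
  constructor
  · rintro h (_ | _ | n) hn
    · omega
    · simp [coeff_X_pow_mul', ha1]
    · rw [hcoeff_add_two]
      rcases n with _ | n
      · rw [hS_zero, ha2, Nat.cast_one]
      · exact h (n + 1) (by omega)
  · intro h n _
    rw [h (n + 2) (by omega), hcoeff_add_two]
end

section
/- Let a : ℕ → ℕ satisfy a(1) = 1. Then for every n ≥ 1, the equation a(n+2) = Σ_{p ⊢ n} ∏_{i ∈ p} a(i), where the sum is over all partitions p of n, holds if and only if the equation a(n+2) = 1 + Σ_{k=2}^{n} Σ_{q} ∏_{i ∈ q} a(i) holds, where the inner sum is over all partitions q of n + 2 − k with every part at least 2. -/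
/-!
Split a partition of `n` into its parts `≥ 2`, a partition of some `s ≤ n` with all parts `≥ 2`,
and `n - s` parts equal to `1`; this is a bijection, and since `a 1 = 1` the weight
`∏ a i` only sees the parts `≥ 2`. Hence `∑_{p ⊢ n} ∏ a i = ∑_{s=0}^{n} ∑_{q ⊢ s, parts ≥ 2} ∏ a i`,
where `s = 0` contributes `1` (the empty partition), `s = 1` contributes nothing, and
`s = n + 2 - k` reindexes the rest.
-/

open Finset Multiset

theorem Multiset.prod_map_filter_two_le {M : Type*} [CommMonoid M] {a : ℕ → M} (ha : a 1 = 1)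
    {s : Multiset ℕ} (hs : ∀ i ∈ s, 0 < i) :
    ((s.filter (2 ≤ ·)).map a).prod = (s.map a).prod := by
  have hones : ((s.filter (¬ 2 ≤ ·)).map a).prod = 1 := by
    refine prod_eq_one fun x hx => ?_
    obtain ⟨i, hi, rfl⟩ := mem_map.1 hx
    obtain ⟨hmem, hlt⟩ := mem_filter.1 hi
    obtain rfl : i = 1 := by have := hs i hmem; omega
    exact ha
  rw [← mul_one ((s.filter (2 ≤ ·)).map a).prod, ← hones, ← prod_add, ← Multiset.map_add,
    filter_add_not]

namespace Nat.Partition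

variable {n : ℕ}

def largeParts (p : n.Partition) : (p.parts.filter (2 ≤ ·)).sum.Partition where
  parts := p.parts.filter (2 ≤ ·)
  parts_pos hi := p.parts_pos (mem_filter.1 hi).1
  parts_sum := rfl

def addOnes {s : ℕ} (q : s.Partition) (h : s ≤ n) : n.Partition where
  parts := q.parts + replicate (n - s) 1
  parts_pos hi := by
    rcases Multiset.mem_add.1 hi with hi | hi
    · exact q.parts_pos hi
    · rw [eq_of_mem_replicate hi]; exact Nat.one_pos
  parts_sum := by
    rw [sum_add, q.parts_sum, sum_replicate, smul_eq_mul, mul_one]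
    omega

theorem filter_not_two_le_parts_eq_replicate (p : n.Partition) :
    p.parts.filter (¬ 2 ≤ ·) = replicate (n - (p.parts.filter (2 ≤ ·)).sum) 1 := by
  have hones : p.parts.filter (¬ 2 ≤ ·) = replicate (p.parts.count 1) 1 := by
    rw [← Multiset.filter_eq']
    exact filter_congr fun i hi => by have := p.parts_pos hi; omega
  have hsum := sum_filter_add_sum_filter_not (s := p.parts) (2 ≤ ·)
  rw [hones, sum_replicate, smul_eq_mul, mul_one, p.parts_sum] at hsum
  rw [hones]
  congr 1
  omega

theorem sigma_mk_eq_of_parts_eq {s t : ℕ} {p : s.Partition} {q : t.Partition}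
    (h : p.parts = q.parts) : (⟨s, p⟩ : Σ k, k.Partition) = ⟨t, q⟩ := by
  obtain rfl : s = t := by rw [← p.parts_sum, ← q.parts_sum, h]
  rw [Nat.Partition.ext h]

theorem sum_filter_two_le_parts_eq_sum_range {M : Type*} [AddCommMonoid M]
    (g : Multiset ℕ → M) (n : ℕ) :
    ∑ p : n.Partition, g (p.parts.filter (2 ≤ ·)) =
      ∑ s ∈ range (n + 1),
        ∑ q ∈ univ.filter (fun q : s.Partition => ∀ i ∈ q.parts, 2 ≤ i), g q.parts := by
  rw [sum_sigma']
  refine sum_bij' (fun p _ => ⟨_, largeParts p⟩)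
    (fun x hx => addOnes x.2 (Nat.lt_succ_iff.1 (Finset.mem_range.1 (mem_sigma.1 hx).1)))
    (fun p _ => ?_) (fun _ _ => mem_univ _) (fun p _ => ?_) (fun x hx => ?_) (fun _ _ => rfl)
  · refine mem_sigma.2 ⟨Finset.mem_range.2 (Nat.lt_succ_of_le ?_), by simp [largeParts]⟩
    calc (p.parts.filter (2 ≤ ·)).sum
        ≤ (p.parts.filter (2 ≤ ·)).sum + (p.parts.filter (¬ 2 ≤ ·)).sum := Nat.le_add_right _ _
      _ = n := by rw [Multiset.sum_filter_add_sum_filter_not, p.parts_sum]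
  · exact Nat.Partition.ext <| by
      simp only [addOnes, largeParts, ← filter_not_two_le_parts_eq_replicate, filter_add_not]
  · obtain ⟨s, q⟩ := x
    have hq : ∀ i ∈ q.parts, 2 ≤ i := by simpa using (mem_sigma.1 hx).2
    refine sigma_mk_eq_of_parts_eq ?_
    simp only [largeParts, addOnes, filter_add, filter_eq_self.2 hq, add_eq_left]
    exact filter_eq_nil.2 fun i hi => by rw [eq_of_mem_replicate hi]; omega

end Nat.Partition

/-- For `a : ℕ → ℕ` with `a 1 = 1` and any `n ≥ 1`, the recurrence
`a (n+2) = ∑_{p ⊢ n} ∏_{i ∈ p} a i` holds if and only if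
`a (n+2) = 1 + ∑_{k=2}^{n} ∑_{q ⊢ (n+2-k), all parts ≥ 2} ∏_{i ∈ q} a i` holds. -/
theorem stmt_6 (a : ℕ → ℕ) (ha : a 1 = 1) (n : ℕ) (hn : 1 ≤ n) :
    (a (n + 2) = ∑ p : Nat.Partition n, ((p.parts.map a).prod))
      ↔ (a (n + 2) = 1 + ∑ k ∈ Finset.Icc 2 n,
          ∑ q ∈ Finset.univ.filter
              (fun q : Nat.Partition (n + 2 - k) => ∀ i ∈ q.parts, 2 ≤ i),
            ((q.parts.map a).prod)) := by
  let f (s : ℕ) : ℕ :=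
    ∑ q ∈ univ.filter (fun q : s.Partition => ∀ i ∈ q.parts, 2 ≤ i), (q.parts.map a).prod
  have hreflect : ∑ k ∈ Icc 2 n, f (n + 2 - k) = ∑ s ∈ Icc 2 n, f s := by
    rw [← Ico_add_one_right_eq_Icc, sum_Ico_reflect f 2 (by omega)]
    congr 2; omega
  have hsplit : ∑ p : n.Partition, (p.parts.map a).prod = 1 + ∑ s ∈ Icc 2 n, f s := by
    simp_rw [← Multiset.prod_map_filter_two_le ha (fun i => Nat.Partition.parts_pos _)]
    rw [Nat.Partition.sum_filter_two_le_parts_eq_sum_range (fun m => (m.map a).prod),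
      range_eq_Ico, sum_eq_sum_Ico_succ_bot (by omega), sum_eq_sum_Ico_succ_bot (by omega),
      Ico_add_one_right_eq_Icc]
    simp [f]
  rw [hsplit, ← hreflect]
end
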